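/- Let X = ω(u, σ) be the ω-limit set of the sequence u (constructed from A_1 = 10111, A_{n+1} = A_n O_n A_n I_n A_n) under the shift σ on Σ_2, let a = 000... and b = 111..., and let f_0 ≡ a, F = {σ, f_0}. Then a and b are the only strongly nonwandering points of (X, F): for every x ∈ X \ {a, b} there is an open neighborhood V of x such that for all y ∈ X, limsup_{n→∞} (1/n)·#{0 ≤ i ≤ n−1 : F^i(y) ∩ V ≠ ∅} = 0. -/

import Mathlib

open Set Metric Filter TopologicalSpace

/-- The set of all `n`-fold compositions of members of `F = {f 0, …, f (m-1)}` applied to `x`. -/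
def iterSet {X : Type*} {m : ℕ} (f : Fin m → X → X) : ℕ → X → Set X
  | 0, x => {x}
  | n + 1, x => ⋃ i, iterSet f n (f i x)

/-- The words `A_n` over the alphabet `{0,1}` (`false = 0`, `true = 1`):
`A₁ = 10111` and `A_{n+1} = A_n O_n A_n I_n A_n`, where `O_n` (resp. `I_n`) is the constant-`0`
(resp. constant-`1`) word of the same length as `A_n`. (`Aword 0` is a dummy value.) -/
def Aword : ℕ → List Bool
  | 0 => []
  | 1 => [true, false, true, true, true]
  | n + 2 =>
      Aword (n + 1) ++ List.replicate (Aword (n + 1)).length false ++ Aword (n + 1)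
        ++ List.replicate (Aword (n + 1)).length true ++ Aword (n + 1)
def Sig2 : Type := ℕ → Bool

noncomputable def sdist (a b : Sig2) : ℝ :=
  ∑' i : ℕ, (if a i = b i then (0 : ℝ) else 1) / 2 ^ i

lemma sdist_term_nonneg (a b : Sig2) (i : ℕ) :
    0 ≤ (if a i = b i then (0 : ℝ) else 1) / 2 ^ i := by
  apply div_nonneg _ (by positivity)
  split <;> norm_num

lemma sdist_summable (a b : Sig2) :
    Summable fun i : ℕ => (if a i = b i then (0 : ℝ) else 1) / 2 ^ i := by
  refine Summable.of_nonneg_of_le (sdist_term_nonneg a b) (fun i => ?_)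
    summable_geometric_two
  rw [one_div, inv_pow, ← one_div]
  gcongr
  split <;> norm_num

noncomputable instance : MetricSpace Sig2 where
  dist := sdist
  dist_self a := by
    unfold sdist; simp
  dist_comm a b := by
    refine tsum_congr fun i => ?_
    by_cases h : a i = b i
    · rw [if_pos h, if_pos h.symm]
    · rw [if_neg h, if_neg fun h' => h h'.symm]
  dist_triangle a b c := by
    have key : ∀ i : ℕ, (if a i = c i then (0 : ℝ) else 1) / 2 ^ i ≤
        (if a i = b i then (0 : ℝ) else 1) / 2 ^ i
          + (if b i = c i then (0 : ℝ) else 1) / 2 ^ i := by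
      intro i
      by_cases hac : a i = c i
      · rw [if_pos hac, zero_div]
        exact add_nonneg (sdist_term_nonneg a b i) (sdist_term_nonneg b c i)
      · have h : ¬ a i = b i ∨ ¬ b i = c i := by
          by_contra hcon
          push_neg at hcon
          exact hac (hcon.1.trans hcon.2)
        rcases h with h | h
        · rw [if_neg hac, if_neg h]
          have := sdist_term_nonneg b c i
          linarith
        · rw [if_neg hac, if_neg h]
          have := sdist_term_nonneg a b i
          linarith
    calc sdist a c ≤ ∑' i : ℕ, ((if a i = b i then (0 : ℝ) else 1) / 2 ^ i
          + (if b i = c i then (0 : ℝ) else 1) / 2 ^ i) :=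
        Summable.tsum_le_tsum key (sdist_summable a c) ((sdist_summable a b).add (sdist_summable b c))
      _ = sdist a b + sdist b c := Summable.tsum_add (sdist_summable a b) (sdist_summable b c)
  eq_of_dist_eq_zero := by
    intro a b h
    funext i
    by_contra hne
    have hle := Summable.le_tsum (sdist_summable a b) i fun j _ => sdist_term_nonneg a b j
    rw [show (∑' i : ℕ, (if a i = b i then (0 : ℝ) else 1) / 2 ^ i) = 0 from h] at hle
    rw [if_neg hne] at hle
    have : (0 : ℝ) < 1 / 2 ^ i := by positivity
    exact absurd hle (not_le.mpr this)

/-- The shift map `σ` on `Σ₂`. -/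
def shiftS (x : Sig2) : Sig2 := fun n => x (n + 1)

/-- The ω-limit set of the point `u` under the shift `σ`. -/
def omegaLim (u : Sig2) : Set Sig2 :=
  ⋂ n : ℕ, closure {y : Sig2 | ∃ k : ℕ, n ≤ k ∧ y = shiftS^[k] u}

/-- The constant-`0` sequence `a = 000⋯`. -/
def aseq : Sig2 := fun _ => false

/-- The constant-`1` sequence `b = 111⋯`. -/
def bseq : Sig2 := fun _ => true

/-- The sequence `u` extending all the words `A_n`, viewed as a point of `Σ₂`. -/
def useqS : Sig2 := fun i => (Aword (i + 1)).getD i false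

/-- The multiple mapping `F = {σ, f₀}` where `f₀ ≡ a` is constant. -/
def Fsig : Fin 2 → Sig2 → Sig2 := ![shiftS, fun _ => aseq]


/-!
A sequence lies in `ω(u, σ)` iff each of its prefixes occurs in `u` arbitrarily late. The fixed
points `a` and `b` of `σ` occur in `u` as arbitrarily long blocks `O_n`, `I_n`, so they lie in `X`,
and `a ∈ F^i(a)`, `b ∈ F^i(b)` for every `i`. A point `x ≠ a, b` changes value somewhere,
`x K ≠ x (K + 1)`, and the open set `V` of all such sequences misses `a`. Since
`F^i(y) ⊆ {σ^i y, a}`, a visit of `F^i(y)` to `V` is a change of value of `y` at `K + i`. By the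
self-similarity `A_{k+1} = A_k O_k A_k I_k A_k`, a window of length `5^k` in `u`, hence in `y`,
contains `O(3^k)` changes of value, so the visits have density zero.
-/

namespace Sig2

lemma eq_of_dist_lt {x y : Sig2} {N : ℕ} (h : dist x y < (1 / 2) ^ N) :
    ∀ i ≤ N, x i = y i := by
  intro i hi
  by_contra hne
  have hterm := (sdist_summable x y).le_tsum i fun j _ => sdist_term_nonneg x y j
  rw [if_neg hne] at hterm
  have : ((1 : ℝ) / 2) ^ N ≤ 1 / 2 ^ i := by
    rw [div_pow, one_pow]
    exact one_div_le_one_div_of_le (by positivity) (pow_le_pow_right₀ (by norm_num) hi)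
  exact absurd (this.trans hterm) (not_le.2 h)

lemma dist_le_of_forall_lt {x y : Sig2} {N : ℕ} (h : ∀ i < N, x i = y i) :
    dist x y ≤ 2 * (1 / 2) ^ N := by
  have hhead : ∑ i ∈ Finset.range N, (if x i = y i then (0 : ℝ) else 1) / 2 ^ i = 0 :=
    Finset.sum_eq_zero fun i hi => by rw [if_pos (h i (Finset.mem_range.1 hi)), zero_div]
  have htail : ∀ i, (if x (i + N) = y (i + N) then (0 : ℝ) else 1) / 2 ^ (i + N)
      ≤ (1 / 2) ^ N * (1 / 2) ^ i := fun i => by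
    rw [← pow_add, add_comm N, div_pow, one_pow]
    gcongr
    split <;> norm_num
  calc dist x y
      = ∑ i ∈ Finset.range N, (if x i = y i then (0 : ℝ) else 1) / 2 ^ i
        + ∑' i, (if x (i + N) = y (i + N) then (0 : ℝ) else 1) / 2 ^ (i + N) :=
        ((sdist_summable x y).sum_add_tsum_nat_add N).symm
    _ ≤ ∑' i : ℕ, (1 / 2 : ℝ) ^ N * (1 / 2) ^ i := by
        rw [hhead, zero_add]
        exact ((sdist_summable x y).comp_injective (add_left_injective N)).tsum_le_tsum htail
          (summable_geometric_two.mul_left _)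
    _ = 2 * (1 / 2) ^ N := by rw [tsum_mul_left, tsum_geometric_two, mul_comm]

lemma continuous_apply (i : ℕ) : Continuous fun x : Sig2 => x i :=
  ((IsLocallyConstant.iff_eventually_eq _).2 fun x => Metric.eventually_nhds_iff.2
    ⟨(1 / 2) ^ i, by positivity, fun _ hy => eq_of_dist_lt hy i le_rfl⟩).continuous

lemma eq_aseq_or_eq_bseq {x : Sig2} (h : ∀ K, x K = x (K + 1)) : x = aseq ∨ x = bseq := by
  have hconst : ∀ j, x j = x 0 := fun j => by
    induction j with
    | zero => rfl
    | succ j ih => rw [← h j, ih]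
  cases hx : x 0
  · exact Or.inl (funext fun j => (hconst j).trans hx)
  · exact Or.inr (funext fun j => (hconst j).trans hx)

end Sig2

lemma iterate_shiftS_apply (k : ℕ) (x : Sig2) (i : ℕ) : shiftS^[k] x i = x (k + i) := by
  induction k generalizing x with
  | zero => simp
  | succ k ih => rw [Function.iterate_succ_apply, ih]; exact congrArg x (by omega)

lemma mem_omegaLim_iff {x u : Sig2} :
    x ∈ omegaLim u ↔ ∀ n N, ∃ k ≥ n, ∀ i < N, x i = u (k + i) := by
  simp only [omegaLim, mem_iInter, Metric.mem_closure_iff]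
  constructor
  · intro hx n N
    obtain ⟨_, ⟨k, hk, rfl⟩, hdist⟩ := hx n _ (pow_pos (by norm_num : (0 : ℝ) < 1 / 2) N)
    exact ⟨k, hk, fun i hi =>
      (Sig2.eq_of_dist_lt hdist i hi.le).trans (iterate_shiftS_apply k u i)⟩
  · intro hx n ε hε
    obtain ⟨N, hN⟩ := exists_pow_lt_of_lt_one (half_pos hε) (by norm_num : (1 / 2 : ℝ) < 1)
    obtain ⟨k, hk, hagree⟩ := hx n N
    refine ⟨_, ⟨k, hk, rfl⟩,
      (Sig2.dist_le_of_forall_lt fun i hi => ?_).trans_lt ((lt_div_iff₀' two_pos).1 hN)⟩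
    rw [iterate_shiftS_apply]
    exact hagree i hi

lemma List.getD_flatten_of_forall_length_eq {α : Type*} {L : ℕ} (ls : List (List α))
    (hL : ∀ l ∈ ls, l.length = L) (d : α) (r : ℕ) {i : ℕ} (hi : i < L) :
    ls.flatten.getD (r * L + i) d = (ls.getD r []).getD i d := by
  induction ls generalizing r with
  | nil => simp
  | cons l ls ih =>
    have hl : l.length = L := hL l List.mem_cons_self
    rw [List.flatten_cons]
    cases r with
    | zero => simpa using List.getD_append l _ d i (hl ▸ hi)
    | succ r =>
      rw [List.getD_append_right _ _ _ _ (by rw [hl]; nlinarith),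
        show (r + 1) * L + i - l.length = r * L + i by rw [hl]; ring_nf; omega,
        ih (fun l' hl' => hL l' (List.mem_cons_of_mem _ hl')) r]
      simp

lemma Aword_succ_succ (n : ℕ) :
    Aword (n + 2) = [Aword (n + 1), List.replicate (Aword (n + 1)).length false, Aword (n + 1),
      List.replicate (Aword (n + 1)).length true, Aword (n + 1)].flatten := by
  simp [Aword]

lemma length_Aword (n : ℕ) : (Aword (n + 1)).length = 5 ^ (n + 1) := by
  induction n with
  | zero => rfl
  | succ n ih => rw [Aword_succ_succ]; simp [ih]; ring

lemma Aword_prefix {n m : ℕ} (h : n ≤ m) : Aword (n + 1) <+: Aword (m + 1) := by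
  induction m, h using Nat.le_induction with
  | base => exact List.prefix_refl _
  | succ m _ ih =>
    refine ih.trans ?_
    rw [Aword_succ_succ]
    simp

lemma useqS_eq_getD {k i : ℕ} (hi : i < 5 ^ (k + 1)) :
    useqS i = (Aword (k + 1)).getD i false := by
  have hprefix : ∀ {n m : ℕ}, n ≤ m → i < 5 ^ (n + 1) →
      (Aword (n + 1)).getD i false = (Aword (m + 1)).getD i false := fun {n m} h hi => by
    have hi' : i < (Aword (n + 1)).length := (length_Aword n).symm ▸ hi
    rw [List.getD_eq_getElem _ _ hi',
      List.getD_eq_getElem _ _ (hi'.trans_le (Aword_prefix h).length_le)]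
    exact (Aword_prefix h).getElem hi'
  rcases le_total i k with h | h
  · exact hprefix h <|
      (Nat.lt_pow_self (by norm_num)).trans_le (Nat.pow_le_pow_right (by norm_num) (by omega))
  · exact (hprefix h hi).symm

lemma useqS_self_similar {k r i : ℕ} (hr : r < 5) (hi : i < 5 ^ k) :
    useqS (r * 5 ^ k + i) = if r = 1 then false else if r = 3 then true else useqS i := by
  have hlt : r * 5 ^ k + i < 5 ^ (k + 1) := by rw [pow_succ]; nlinarith
  rw [useqS_eq_getD hlt]
  cases k with
  | zero =>
    obtain rfl : i = 0 := by simpa using hi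
    rw [useqS_eq_getD (k := 0) (by norm_num)]
    interval_cases r <;> rfl
  | succ k =>
    rw [useqS_eq_getD hi, Aword_succ_succ, ← length_Aword k,
      List.getD_flatten_of_forall_length_eq _ (by simp) _ _ (by rwa [length_Aword])]
    have hi' : i < (Aword (k + 1)).length := by rwa [length_Aword]
    interval_cases r <;> simp [hi']

lemma useqS_block (k q : ℕ) :
    (∀ i < 5 ^ k, useqS (q * 5 ^ k + i) = useqS i) ∨
      ∃ c, ∀ i < 5 ^ k, useqS (q * 5 ^ k + i) = c := by
  induction q using Nat.strong_induction_on generalizing k with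
  | _ q ih =>
  rcases Nat.eq_zero_or_pos q with rfl | hq
  · exact Or.inl fun i _ => by rw [zero_mul, zero_add]
  have hpos : ∀ i, q * 5 ^ k + i = q / 5 * 5 ^ (k + 1) + (q % 5 * 5 ^ k + i) := fun i => by
    conv_lhs => rw [← Nat.div_add_mod q 5]
    ring
  have hlt : ∀ i < 5 ^ k, q % 5 * 5 ^ k + i < 5 ^ (k + 1) := fun i hi => by
    have := Nat.mod_lt q (by norm_num : 5 > 0)
    rw [pow_succ]; nlinarith
  rcases ih (q / 5) (Nat.div_lt_self hq (by norm_num)) (k + 1) with hcopy | ⟨c, hc⟩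
  · have hu : ∀ i < 5 ^ k, useqS (q * 5 ^ k + i) =
        if q % 5 = 1 then false else if q % 5 = 3 then true else useqS i := fun i hi => by
      rw [hpos, hcopy _ (hlt i hi), useqS_self_similar (Nat.mod_lt q (by norm_num)) hi]
    by_cases h1 : q % 5 = 1
    · exact Or.inr ⟨false, fun i hi => by simpa [h1] using hu i hi⟩
    by_cases h3 : q % 5 = 3
    · exact Or.inr ⟨true, fun i hi => by simpa [h3] using hu i hi⟩
    exact Or.inl fun i hi => by simpa [h1, h3] using hu i hi
  · exact Or.inr ⟨c, fun i hi => by rw [hpos, hc _ (hlt i hi)]⟩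

lemma aseq_mem_omegaLim : aseq ∈ omegaLim useqS := by
  refine mem_omegaLim_iff.2 fun n N => ⟨1 * 5 ^ (n + N), ?_, fun i hi => ?_⟩ <;>
    have := Nat.lt_pow_self (n := n + N) (by norm_num : 1 < 5)
  · omega
  · rw [useqS_self_similar (by norm_num) (by omega)]
    rfl

lemma bseq_mem_omegaLim : bseq ∈ omegaLim useqS := by
  refine mem_omegaLim_iff.2 fun n N => ⟨3 * 5 ^ (n + N), ?_, fun i hi => ?_⟩ <;>
    have := Nat.lt_pow_self (n := n + N) (by norm_num : 1 < 5)
  · omega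
  · rw [useqS_self_similar (by norm_num) (by omega)]
    rfl

def flipCount (x : ℕ → Bool) (s : Finset ℕ) : ℕ :=
  (s.filter fun i => x i ≠ x (i + 1)).card

section flipCount

variable {x y : ℕ → Bool}

lemma flipCount_mono {s t : Finset ℕ} (h : s ⊆ t) : flipCount x s ≤ flipCount x t :=
  Finset.card_le_card (Finset.filter_subset_filter _ h)

lemma flipCount_union_le (s t : Finset ℕ) :
    flipCount x (s ∪ t) ≤ flipCount x s + flipCount x t := by
  rw [flipCount, Finset.filter_union]
  exact Finset.card_union_le _ _

lemma flipCount_biUnion_le {ι : Type*} (I : Finset ι) (s : ι → Finset ℕ) :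
    flipCount x (I.biUnion s) ≤ ∑ r ∈ I, flipCount x (s r) := by
  rw [flipCount, Finset.filter_biUnion]
  exact Finset.card_biUnion_le

lemma flipCount_le_card (s : Finset ℕ) : flipCount x s ≤ s.card :=
  Finset.card_filter_le _ _

lemma flipCount_const (c : Bool) (s : Finset ℕ) : flipCount (fun _ => c) s = 0 := by
  simp [flipCount]

lemma flipCount_Ico_eq_of_forall_le {a b n : ℕ} (h : ∀ i ≤ n, x (a + i) = y (b + i)) :
    flipCount x (Finset.Ico a (a + n)) = flipCount y (Finset.Ico b (b + n)) := by
  have hshift : ∀ (z : ℕ → Bool) c, flipCount z (Finset.Ico c (c + n)) =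
      ((Finset.range n).filter fun i => z (c + i) ≠ z (c + (i + 1))).card := fun z c => by
    have hIco : Finset.Ico c (c + n) = (Finset.range n).map (addLeftEmbedding c) := by
      rw [Finset.range_eq_Ico, Finset.map_add_left_Ico, add_zero]
    rw [flipCount, hIco, Finset.filter_map, Finset.card_map]
    rfl
  rw [hshift, hshift]
  refine congrArg Finset.card (Finset.filter_congr fun i hi => ?_)
  rw [Finset.mem_range] at hi
  rw [h i hi.le, h (i + 1) hi]

lemma flipCount_Ico_le_of_forall_lt {a b n : ℕ} (hn : 1 ≤ n)
    (h : ∀ i < n, x (a + i) = y (b + i)) :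
    flipCount x (Finset.Ico a (a + n)) ≤ flipCount y (Finset.Ico b (b + (n - 1))) + 1 := by
  have hcover : Finset.Ico a (a + n) ⊆ Finset.Ico a (a + (n - 1)) ∪ {a + (n - 1)} := fun i => by
    simp only [Finset.mem_Ico, Finset.mem_union, Finset.mem_singleton]
    omega
  calc flipCount x (Finset.Ico a (a + n))
      ≤ flipCount x (Finset.Ico a (a + (n - 1))) + flipCount x {a + (n - 1)} :=
        (flipCount_mono hcover).trans (flipCount_union_le _ _)
    _ ≤ flipCount y (Finset.Ico b (b + (n - 1))) + 1 := by
        rw [flipCount_Ico_eq_of_forall_le fun i hi => h i (by omega)]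
        exact Nat.add_le_add_left ((flipCount_le_card _).trans (Finset.card_singleton _).le) _

end flipCount

lemma flipCount_useqS_block_le (k q : ℕ) :
    flipCount useqS (Finset.Ico (q * 5 ^ k) (q * 5 ^ k + 5 ^ k))
      ≤ flipCount useqS (Finset.Ico 0 (5 ^ k - 1)) + 1 := by
  have hp : 1 ≤ 5 ^ k := Nat.one_le_pow k 5 (by norm_num)
  rcases useqS_block k q with hcopy | ⟨c, hconst⟩
  · simpa using flipCount_Ico_le_of_forall_lt (b := 0) hp fun i hi =>
      (hcopy i hi).trans (by rw [zero_add])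
  · refine (flipCount_Ico_le_of_forall_lt (y := fun _ => c) (b := 0) hp hconst).trans ?_
    rw [flipCount_const]
    exact Nat.le_add_left _ _

lemma flipCount_useqS_prefix_le (k : ℕ) :
    flipCount useqS (Finset.Ico 0 (5 ^ k - 1)) + 3 ≤ 3 ^ (k + 1) := by
  induction k with
  | zero => simp [flipCount]
  | succ k ih =>
    have hp : 0 < 5 ^ k := by positivity
    have hblock := flipCount_useqS_block_le k
    have hconst : ∀ r, r = 1 ∨ r = 3 →
        flipCount useqS (Finset.Ico (r * 5 ^ k) (r * 5 ^ k + 5 ^ k)) ≤ 1 := by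
      rintro r hr
      refine (flipCount_Ico_le_of_forall_lt (y := fun _ => decide (r = 3)) (b := 0) hp
        fun i hi => ?_).trans (by rw [flipCount_const])
      rw [useqS_self_similar (by omega) hi]
      rcases hr with rfl | rfl <;> rfl
    have hcover : Finset.Ico 0 (5 ^ (k + 1) - 1) ⊆
        (Finset.range 5).biUnion fun r => Finset.Ico (r * 5 ^ k) (r * 5 ^ k + 5 ^ k) :=
        fun j hj => by
      rw [Finset.mem_Ico, pow_succ] at hj
      have := Nat.div_add_mod j (5 ^ k)
      have := Nat.mod_lt j hp
      simp only [Finset.mem_biUnion, Finset.mem_range, Finset.mem_Ico]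
      exact ⟨j / 5 ^ k, (Nat.div_lt_iff_lt_mul hp).2 (by omega), by rw [mul_comm]; omega⟩
    have hsplit := (flipCount_mono (x := useqS) hcover).trans (flipCount_biUnion_le _ _)
    simp only [Finset.sum_range_succ, Finset.sum_range_zero] at hsplit
    have := hblock 0; have := hblock 2; have := hblock 4
    have := hconst 1 (by simp); have := hconst 3 (by simp)
    rw [pow_succ 3]
    omega

lemma flipCount_useqS_window_le {k n : ℕ} (m : ℕ) (hn : n ≤ 5 ^ k) :
    flipCount useqS (Finset.Ico m (m + n)) ≤ 2 * 3 ^ (k + 1) := by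
  have hp : 0 < 5 ^ k := by positivity
  have hm := Nat.div_add_mod' m (5 ^ k)
  have hmod := Nat.mod_lt m hp
  have hcover : Finset.Ico m (m + n) ⊆ Finset.Ico (m / 5 ^ k * 5 ^ k) (m / 5 ^ k * 5 ^ k + 5 ^ k)
      ∪ Finset.Ico ((m / 5 ^ k + 1) * 5 ^ k) ((m / 5 ^ k + 1) * 5 ^ k + 5 ^ k) := fun j => by
    simp only [Finset.mem_Ico, Finset.mem_union]
    rw [add_mul, one_mul]
    omega
  have h1 := flipCount_useqS_block_le k (m / 5 ^ k)
  have h2 := flipCount_useqS_block_le k (m / 5 ^ k + 1)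
  have h3 := flipCount_useqS_prefix_le k
  have := (flipCount_mono (x := useqS) hcover).trans (flipCount_union_le _ _)
  omega

lemma flipCount_le_of_mem_omegaLim {y : Sig2} (hy : y ∈ omegaLim useqS) (K : ℕ) {k n : ℕ}
    (hn : n ≤ 5 ^ k) : flipCount y (Finset.Ico K (K + n)) ≤ 2 * 3 ^ (k + 1) := by
  obtain ⟨m, -, hm⟩ := mem_omegaLim_iff.1 hy 0 (K + n + 1)
  rw [flipCount_Ico_eq_of_forall_le (y := useqS) (b := m + K)
    fun i hi => (hm (K + i) (by omega)).trans (by rw [add_assoc])]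
  exact flipCount_useqS_window_le _ hn

lemma self_mem_iterSet {X : Type*} {m : ℕ} {f : Fin m → X → X} {x : X} {j : Fin m}
    (h : f j x = x) (n : ℕ) : x ∈ iterSet f n x := by
  induction n with
  | zero => exact rfl
  | succ n ih => exact mem_iUnion.2 ⟨j, by rw [h]; exact ih⟩

lemma iterSet_Fsig_subset (n : ℕ) (y : Sig2) : iterSet Fsig n y ⊆ {shiftS^[n] y, aseq} := by
  induction n generalizing y with
  | zero => exact fun z hz => Or.inl hz
  | succ n ih =>
    refine iUnion_subset fun j => ?_
    fin_cases j
    · exact ih (shiftS y)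
    · refine (ih aseq).trans ?_
      simp [Function.iterate_fixed (show shiftS aseq = aseq from rfl)]

lemma ncard_visits_le_flipCount (y : Sig2) (K n : ℕ) :
    {i | i < n ∧ (iterSet Fsig i y ∩ {z : Sig2 | z K ≠ z (K + 1)}).Nonempty}.ncard
      ≤ flipCount y (Finset.Ico K (K + n)) := by
  unfold flipCount
  rw [← Set.ncard_coe_finset]
  refine Set.ncard_le_ncard_of_injOn (K + ·) ?_ (add_right_injective K).injOn
  rintro i ⟨hi, z, hz, hzV⟩
  rcases iterSet_Fsig_subset i y hz with rfl | rfl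
  · change shiftS^[i] y K ≠ shiftS^[i] y (K + 1) at hzV
    rw [iterate_shiftS_apply, iterate_shiftS_apply] at hzV
    simp only [Finset.coe_filter, Finset.mem_Ico]
    exact ⟨⟨by omega, by omega⟩, by rwa [add_comm K i, add_assoc]⟩
  · exact absurd rfl hzV

lemma limsup_ncard_div_eq_one {P : ℕ → Prop} (h : ∀ i, P i) :
    limsup (fun n : ℕ => ({i | i < n ∧ P i}.ncard : ℝ) / n) atTop = 1 := by
  refine Tendsto.limsup_eq (tendsto_const_nhds.congr' ?_)
  filter_upwards [eventually_ge_atTop 1] with n hn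
  have : {i | i < n ∧ P i} = Iio n := by ext i; simp [h i]
  rw [this, ← Finset.coe_Iio, ncard_coe_finset, Nat.card_Iio, div_self (by positivity)]

lemma tendsto_div_atTop_zero_of_le_mul_pow {c : ℕ → ℕ} {a b C : ℕ} (hb : 1 < b) (hab : a < b)
    (hc : ∀ k n, n ≤ b ^ k → c n ≤ C * a ^ k) :
    Tendsto (fun n => (c n : ℝ) / n) atTop (nhds 0) := by
  have hlog : Tendsto (Nat.log b) atTop atTop :=
    tendsto_atTop_atTop.2 fun K => ⟨b ^ K, fun n hn => Nat.le_log_of_pow_le hb hn⟩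
  have hratio :
      Tendsto (fun n => (C * a : ℝ) * ((a : ℝ) / b) ^ Nat.log b n) atTop (nhds 0) := by
    simpa using ((tendsto_pow_atTop_nhds_zero_of_lt_one (by positivity)
      ((div_lt_one (by positivity)).2 (by exact_mod_cast hab))).comp hlog).const_mul ((C * a : ℝ))
  refine squeeze_zero' (Eventually.of_forall fun n => by positivity) ?_ hratio
  filter_upwards [eventually_ge_atTop 1] with n hn
  have hlow : (b : ℝ) ^ Nat.log b n ≤ n := by exact_mod_cast Nat.pow_log_le_self b (by omega)
  have hup : (c n : ℝ) ≤ C * a ^ (Nat.log b n + 1) := by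
    exact_mod_cast hc _ n (Nat.lt_pow_succ_log_self hb n).le
  calc (c n : ℝ) / n ≤ C * a ^ (Nat.log b n + 1) / b ^ Nat.log b n :=
        div_le_div₀ (by positivity) hup (by positivity) hlow
    _ = C * a * ((a : ℝ) / b) ^ Nat.log b n := by rw [div_pow, pow_succ]; ring

/-- Let `X = ω(u, σ)` and `F = {σ, f₀}` with `f₀ ≡ a`. Then `a = 000⋯` and `b = 111⋯` are
strongly nonwandering points of `(X, F)`, and they are the only ones: every `x ∈ X ∖ {a, b}`
has an open neighborhood `V` such that for every `y ∈ X`,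
`limsup_n (1/n)·#{0 ≤ i ≤ n-1 : F^i(y) ∩ V ≠ ∅} = 0`. -/
theorem only_two_strongly_nonwandering_points :
    aseq ∈ omegaLim useqS ∧ bseq ∈ omegaLim useqS ∧
    (∀ V : Set Sig2, IsOpen V → aseq ∈ V →
      ∃ y ∈ omegaLim useqS,
        0 < Filter.limsup (fun n : ℕ =>
          (({i : ℕ | i < n ∧ (iterSet Fsig i y ∩ V).Nonempty}).ncard : ℝ) / n)
          Filter.atTop) ∧
    (∀ V : Set Sig2, IsOpen V → bseq ∈ V →
      ∃ y ∈ omegaLim useqS,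
        0 < Filter.limsup (fun n : ℕ =>
          (({i : ℕ | i < n ∧ (iterSet Fsig i y ∩ V).Nonempty}).ncard : ℝ) / n)
          Filter.atTop) ∧
    (∀ x ∈ omegaLim useqS, x ≠ aseq → x ≠ bseq →
      ∃ V : Set Sig2, IsOpen V ∧ x ∈ V ∧ ∀ y ∈ omegaLim useqS,
        Filter.limsup (fun n : ℕ =>
          (({i : ℕ | i < n ∧ (iterSet Fsig i y ∩ V).Nonempty}).ncard : ℝ) / n)
          Filter.atTop = 0) := by
  refine ⟨aseq_mem_omegaLim, bseq_mem_omegaLim, fun V _ haV => ⟨aseq, aseq_mem_omegaLim, ?_⟩,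
    fun V _ hbV => ⟨bseq, bseq_mem_omegaLim, ?_⟩, fun x _ hxa hxb => ?_⟩
  · rw [limsup_ncard_div_eq_one fun i => ⟨aseq, self_mem_iterSet (j := 0) rfl i, haV⟩]
    exact one_pos
  · rw [limsup_ncard_div_eq_one fun i => ⟨bseq, self_mem_iterSet (j := 0) rfl i, hbV⟩]
    exact one_pos
  · obtain ⟨K, hK⟩ : ∃ K, x K ≠ x (K + 1) := by
      by_contra! h
      rcases Sig2.eq_aseq_or_eq_bseq h with rfl | rfl <;> contradiction
    refine ⟨{z | z K ≠ z (K + 1)},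
      isOpen_ne_fun (Sig2.continuous_apply K) (Sig2.continuous_apply (K + 1)), hK, fun y hy => ?_⟩
    exact (tendsto_div_atTop_zero_of_le_mul_pow (C := 6) (by norm_num : 1 < 5) (by norm_num : 3 < 5)
      fun k n hn => (ncard_visits_le_flipCount y K n).trans
        ((flipCount_le_of_mem_omegaLim hy K hn).trans_eq (by ring))).limsup_eq
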